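/- Let S be a finite singleton-rich semigroup, s, t ∈ S, and define φ(x,y) = (x* y)⁺, with the sequences s^φ₀ = s, t^φ₀ = t, s^φ_{i+1} = s^φ_i φ(s^φ_i, t^φ_i), t^φ_{i+1} = (s^φ_i)* t^φ_i. Then φ(s^φ_i, t^φ_i) ≤ (s^φ_i)* and φ(s^φ_{i+1}, t^φ_{i+1}) ≤ φ(s^φ_i, t^φ_i) for all i ≥ 0. -/

import Mathlib

open scoped Classical

/-- φ*(s): the idempotent right identities of `s`. -/
def rIds {S : Type*} [Mul S] (s : S) : Set S := {e | e * e = e ∧ s * e = s}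

/-- φ⁺(s): the idempotent left identities of `s`. -/
def lIds {S : Type*} [Mul S] (s : S) : Set S := {e | e * e = e ∧ e * s = s}

/-- `x` is the (necessarily unique) element of a singleton kernel (minimal ideal) of the
subsemigroup `T`: `{x}` is an ideal of `T`, hence the minimal ideal of `T`. -/
def IsKer {S : Type*} [Semigroup S] (T : Subsemigroup S) (x : S) : Prop :=
  x ∈ T ∧ ∀ a ∈ T, a * x = x ∧ x * a = x

/-- The natural partial order on idempotents: `e ≤ f` iff `ef = fe = e`. -/
def nle {S : Type*} [Mul S] (e f : S) : Prop := e * f = e ∧ f * e = e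

/-- The relation `≪`: `s ≪ t` iff `s = s⁺ t s*`, where `sa s = s*` and `pl s = s⁺`. -/
def ll {S : Type*} [Mul S] (sa pl : S → S) (s t : S) : Prop := s = pl s * t * sa s

/-- φ(x,y) = (x* y)⁺. -/
def phiF {S : Type*} [Mul S] (sa pl : S → S) (x y : S) : S := pl (sa x * y)

/-- ψ(x,y) = (x y⁺)*. -/
def psiF {S : Type*} [Mul S] (sa pl : S → S) (x y : S) : S := sa (x * pl y)

/-- The φ-sequence: `(s^φ₀, t^φ₀) = (s, t)`,
`s^φ_{i+1} = s^φ_i φ(s^φ_i, t^φ_i)`, `t^φ_{i+1} = (s^φ_i)* t^φ_i`. -/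
def phiSeq {S : Type*} [Mul S] (sa pl : S → S) (s t : S) : ℕ → S × S
  | 0 => (s, t)
  | i + 1 =>
      let p := phiSeq sa pl s t i
      (p.1 * phiF sa pl p.1 p.2, sa p.1 * p.2)

/-- The ψ-sequence: `(s^ψ₀, t^ψ₀) = (s, t)`,
`s^ψ_{i+1} = s^ψ_i (t^ψ_i)⁺`, `t^ψ_{i+1} = ψ(s^ψ_i, t^ψ_i) t^ψ_i`. -/
def psiSeq {S : Type*} [Mul S] (sa pl : S → S) (s t : S) : ℕ → S × S
  | 0 => (s, t)
  | i + 1 =>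
      let p := psiSeq sa pl s t i
      (p.1 * pl p.2, psiF sa pl p.1 p.2 * p.2)

/-!
An idempotent left identity `f` of `z` lies in the subsemigroup whose kernel is `{z⁺}`, so
`z⁺ ≤ f`; dually, an idempotent right identity of `z` absorbs `z*`.
The first inequality follows since `x*` is an idempotent left identity of `x* y`. For the second,
`φ = φ(x, y)` is an idempotent right identity of `x φ`, hence `φ (x φ)* = (x φ)*`, which makes `φ`
a left identity of `(x φ)* x* y`.
-/

section SingletonKernels

variable {S : Type*} [Semigroup S] {sa pl : S → S}

theorem IsKer.nle_of_mem {T : Subsemigroup S} {x a : S} (hx : IsKer T x) (ha : a ∈ T) :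
    nle x a :=
  ⟨(hx.2 a ha).2, (hx.2 a ha).1⟩

theorem IsKer.mul_self {T : Subsemigroup S} {x : S} (hx : IsKer T x) : x * x = x :=
  (hx.nle_of_mem hx.1).1

theorem nle_pl_of_mul_eq (hpl : ∀ s : S, IsKer (Subsemigroup.closure (lIds s)) (pl s))
    {z f : S} (hf : f * f = f) (hfz : f * z = z) : nle (pl z) f :=
  (hpl z).nle_of_mem (Subsemigroup.subset_closure ⟨hf, hfz⟩)

theorem nle_sa_of_mul_eq (hsa : ∀ s : S, IsKer (Subsemigroup.closure (rIds s)) (sa s))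
    {z e : S} (he : e * e = e) (hze : z * e = z) : nle (sa z) e :=
  (hsa z).nle_of_mem (Subsemigroup.subset_closure ⟨he, hze⟩)

theorem phiF_nle_sa (hsa : ∀ s : S, IsKer (Subsemigroup.closure (rIds s)) (sa s))
    (hpl : ∀ s : S, IsKer (Subsemigroup.closure (lIds s)) (pl s)) (x y : S) :
    nle (phiF sa pl x y) (sa x) := by
  have hidem : sa x * sa x = sa x := (hsa x).mul_self
  exact nle_pl_of_mul_eq hpl hidem (by rw [← mul_assoc, hidem])

theorem phiF_step_nle_phiF (hsa : ∀ s : S, IsKer (Subsemigroup.closure (rIds s)) (sa s))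
    (hpl : ∀ s : S, IsKer (Subsemigroup.closure (lIds s)) (pl s)) (x y : S) :
    nle (phiF sa pl (x * phiF sa pl x y) (sa x * y)) (phiF sa pl x y) := by
  set φ := phiF sa pl x y
  have hidem : φ * φ = φ := (hpl _).mul_self
  have habsorb : φ * sa (x * φ) = sa (x * φ) :=
    (nle_sa_of_mul_eq hsa hidem (by rw [mul_assoc, hidem])).2
  exact nle_pl_of_mul_eq hpl hidem (by rw [← mul_assoc, habsorb])

end SingletonKernels

theorem stmt9_general {S : Type*} [Semigroup S] (sa pl : S → S)
    (hsa : ∀ s : S, IsKer (Subsemigroup.closure (rIds s)) (sa s))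
    (hpl : ∀ s : S, IsKer (Subsemigroup.closure (lIds s)) (pl s))
    (s t : S) :
    ∀ i : ℕ,
      nle (phiF sa pl (phiSeq sa pl s t i).1 (phiSeq sa pl s t i).2)
          (sa (phiSeq sa pl s t i).1) ∧
      nle (phiF sa pl (phiSeq sa pl s t (i + 1)).1 (phiSeq sa pl s t (i + 1)).2)
          (phiF sa pl (phiSeq sa pl s t i).1 (phiSeq sa pl s t i).2) := fun _ =>
  ⟨phiF_nle_sa hsa hpl _ _, phiF_step_nle_phiF hsa hpl _ _⟩

/-- `φ(s^φ_i, t^φ_i) ≤ (s^φ_i)*` and `φ(s^φ_{i+1}, t^φ_{i+1}) ≤ φ(s^φ_i, t^φ_i)` for all `i`. -/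
theorem stmt9 {S : Type*} [Semigroup S] [Fintype S] (sa pl : S → S)
    (hsa : ∀ s : S, IsKer (Subsemigroup.closure (rIds s)) (sa s))
    (hpl : ∀ s : S, IsKer (Subsemigroup.closure (lIds s)) (pl s))
    (s t : S) :
    ∀ i : ℕ,
      nle (phiF sa pl (phiSeq sa pl s t i).1 (phiSeq sa pl s t i).2)
          (sa (phiSeq sa pl s t i).1) ∧
      nle (phiF sa pl (phiSeq sa pl s t (i + 1)).1 (phiSeq sa pl s t (i + 1)).2)
          (phiF sa pl (phiSeq sa pl s t i).1 (phiSeq sa pl s t i).2) :=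
  stmt9_general sa pl hsa hpl s t
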